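/- arXiv:1505.06588 — 9 statements merged into one kernel-verified Lean document; each statement's English description precedes it below -/
import Mathlib

section
/- If Σ₁ and Σ₂ are disjoint alphabets, then for ω-languages L₁ ⊆ Σ₁^ω and L₂ ⊆ Σ₂^ω, the asynchronous product L₁ ∥ L₂ restricted to ω-words coincides with the shuffle L₁ ⧢ L₂, i.e., every ω-word in L₁ ∥ L₂ is an interleaving of a word of L₁ and a word of L₂, and conversely. -/
/-- `l` is a (finite) prefix of the ω-word `w`. -/
def IsListPrefix {α : Type*} (l : List α) (w : ℕ → α) : Prop :=
  ∀ i (h : i < l.length), l.get ⟨i, h⟩ = w i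

/-- The first `n` letters of the ω-word `w`. -/
def firstN {α : Type*} (w : ℕ → α) (n : ℕ) : List α := (List.range n).map w

/-- The concatenation of the blocks `g 0, g 1, …, g (n-1)`. -/
def blocksConcat {α : Type*} (g : ℕ → List α) (n : ℕ) : List α :=
  ((List.range n).map g).flatten

/-- The ω-word `z` is the infinite concatenation `g 0 · g 1 · g 2 ⋯` of the blocks `g`. -/
def JoinsTo {α : Type*} (g : ℕ → List α) (z : ℕ → α) : Prop :=
  (∀ n, IsListPrefix (blocksConcat g n) z) ∧
  (∀ m, ∃ n, m < (blocksConcat g n).length)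

/-- `z` is an interleaving of the ω-words `x` and `y`. -/
def IsInterleaving {α : Type*} (x y z : ℕ → α) : Prop :=
  ∃ xs ys : ℕ → List α,
    (∀ n, IsListPrefix (blocksConcat xs n) x) ∧
    (∀ n, IsListPrefix (blocksConcat ys n) y) ∧
    JoinsTo (fun i => xs i ++ ys i) z

/-- The shuffle of two ω-languages. -/
def Shuffle {α : Type*} (L₁ L₂ : Set (ℕ → α)) : Set (ℕ → α) :=
  {z | ∃ x ∈ L₁, ∃ y ∈ L₂, IsInterleaving x y z}

/-- The projection `Proj_Σ(w)` of `w` onto the alphabet `Σ` is a prefix of some word of `L`: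
every finite prefix of the projection is a prefix of some fixed `v ∈ L`. -/
def ProjIsPrefixOfWordIn {α : Type*} (S : Set α) [DecidablePred (· ∈ S)]
    (L : Set (ℕ → α)) (w : ℕ → α) : Prop :=
  ∃ v ∈ L, ∀ n, IsListPrefix ((firstN w n).filter (fun a => decide (a ∈ S))) v

/-- The asynchronous product of `L₁ ⊆ Σ₁^ω` and `L₂ ⊆ Σ₂^ω` (restricted to ω-words):
ω-words over `Σ₁ ∪ Σ₂` whose projections onto `Σ₁`, resp. `Σ₂`, are prefixes of words
of `L₁`, resp. `L₂`. -/
def AsyncProd {α : Type*} (S₁ S₂ : Set α) [DecidablePred (· ∈ S₁)] [DecidablePred (· ∈ S₂)]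
    (L₁ L₂ : Set (ℕ → α)) : Set (ℕ → α) :=
  {w | (∀ i, w i ∈ S₁ ∪ S₂) ∧ ProjIsPrefixOfWordIn S₁ L₁ w ∧ ProjIsPrefixOfWordIn S₂ L₂ w}

section Helpers
variable {α : Type*}

lemma blocksConcat_succ (g : ℕ → List α) (n : ℕ) :
    blocksConcat g (n+1) = blocksConcat g n ++ g n := by
  simp [blocksConcat, List.range_succ]

lemma firstN_succ (w : ℕ → α) (n : ℕ) :
    firstN w (n+1) = firstN w n ++ [w n] := by
  simp [firstN, List.range_succ]

lemma length_firstN (w : ℕ → α) (n : ℕ) : (firstN w n).length = n := by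
  simp [firstN]

lemma isListPrefix_firstN (w : ℕ → α) (n : ℕ) : IsListPrefix (firstN w n) w := by
  intro i h
  simp [firstN]

lemma isListPrefix_eq {l : List α} {w : ℕ → α} (h : IsListPrefix l w) :
    l = firstN w l.length := by
  apply List.ext_get (by simp [length_firstN])
  intro i h1 h2
  rw [h i h1]
  simp [firstN]

lemma firstN_prefix (w : ℕ → α) {a b : ℕ} (h : a ≤ b) : firstN w a <+: firstN w b := by
  have : firstN w a = (firstN w b).take a := by
    simp [firstN, ← List.map_take, List.take_range, Nat.min_eq_left h]
  rw [this]; exact List.take_prefix _ _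

lemma prefix_of_isListPrefix {l l' : List α} {w : ℕ → α}
    (h : IsListPrefix l w) (h' : IsListPrefix l' w) (hl : l.length ≤ l'.length) :
    l <+: l' := by
  rw [isListPrefix_eq h, isListPrefix_eq h']
  exact firstN_prefix w hl

lemma isListPrefix_of_prefix {l l' : List α} {w : ℕ → α}
    (h : l <+: l') (h' : IsListPrefix l' w) : IsListPrefix l w := by
  intro i hi
  obtain ⟨t, rfl⟩ := h
  have := h' i (by simp; omega)
  rw [← this]
  exact (List.getElem_append_left hi).symm

lemma mem_of_isListPrefix {l : List α} {w : ℕ → α} {S : Set α}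
    (h : IsListPrefix l w) (hw : ∀ i, w i ∈ S) : ∀ a ∈ l, a ∈ S := by
  intro a ha
  obtain ⟨i, hi⟩ := List.mem_iff_get.mp ha
  rw [← hi, h i i.isLt]
  exact hw i

lemma mem_blocksConcat {g : ℕ → List α} {n : ℕ} {a : α} (h : a ∈ blocksConcat g n) :
    ∃ i < n, a ∈ g i := by
  simp only [blocksConcat, List.mem_flatten, List.mem_map] at h
  obtain ⟨l, ⟨i, hi, rfl⟩, hal⟩ := h
  exact ⟨i, List.mem_range.mp hi, hal⟩

end Helpers

/-- If the alphabets `Σ₁` and `Σ₂` are disjoint, then the asynchronous product of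
`L₁ ⊆ Σ₁^ω` and `L₂ ⊆ Σ₂^ω` coincides with their shuffle. -/
theorem asyncProd_eq_shuffle_of_disjoint {α : Type*} (S₁ S₂ : Set α)
    [DecidablePred (· ∈ S₁)] [DecidablePred (· ∈ S₂)]
    (L₁ L₂ : Set (ℕ → α))
    (hdis : Disjoint S₁ S₂)
    (hL₁ : ∀ x ∈ L₁, ∀ i, x i ∈ S₁)
    (hL₂ : ∀ y ∈ L₂, ∀ i, y i ∈ S₂) :
    AsyncProd S₁ S₂ L₁ L₂ = Shuffle L₁ L₂ := by
  ext z
  constructor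
  · rintro ⟨hmem, ⟨x, hx, hpx⟩, ⟨y, hy, hpy⟩⟩
    refine ⟨x, hx, y, hy, ?_⟩
    set xs : ℕ → List α := fun i => if z i ∈ S₁ then [z i] else [] with hxs
    set ys : ℕ → List α := fun i => if z i ∈ S₁ then [] else [z i] with hys
    have hmem' : ∀ i, z i ∉ S₁ → z i ∈ S₂ := by
      intro i hi
      rcases hmem i with h | h
      · exact absurd h hi
      · exact h
    have hg : ∀ n, blocksConcat (fun i => xs i ++ ys i) n = firstN z n := by
      intro n
      induction n with
      | zero => simp [blocksConcat, firstN]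
      | succ n ih =>
        rw [blocksConcat_succ, firstN_succ, ih]
        by_cases h : z n ∈ S₁ <;> simp [hxs, hys, h]
    have hbx : ∀ n, blocksConcat xs n
        = (firstN z n).filter (fun a => decide (a ∈ S₁)) := by
      intro n
      induction n with
      | zero => simp [blocksConcat, firstN]
      | succ n ih =>
        rw [blocksConcat_succ, firstN_succ, List.filter_append, ih]
        by_cases h : z n ∈ S₁ <;> simp [hxs, h]
    have hby : ∀ n, blocksConcat ys n
        = (firstN z n).filter (fun a => decide (a ∈ S₂)) := by
      intro n
      induction n with
      | zero => simp [blocksConcat, firstN]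
      | succ n ih =>
        rw [blocksConcat_succ, firstN_succ, List.filter_append, ih]
        by_cases h : z n ∈ S₁
        · have : z n ∉ S₂ := fun h2 => hdis.ne_of_mem h h2 rfl
          simp [hys, h, this]
        · have := hmem' n h
          simp [hys, h, this]
    refine ⟨xs, ys, ?_, ?_, ?_, ?_⟩
    · intro n; rw [hbx]; exact hpx n
    · intro n; rw [hby]; exact hpy n
    · intro n; rw [hg]; exact isListPrefix_firstN z n
    · intro m
      exact ⟨m + 1, by rw [hg, length_firstN]; omega⟩
  · rintro ⟨x, hx, y, hy, xs, ys, hpx, hpy, hj1, hj2⟩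
    have hxS : ∀ n a, a ∈ xs n → a ∈ S₁ := by
      intro n a ha
      exact mem_of_isListPrefix (hpx (n+1)) (hL₁ x hx) a
        (by rw [blocksConcat_succ]; exact List.mem_append_right _ ha)
    have hyS : ∀ n a, a ∈ ys n → a ∈ S₂ := by
      intro n a ha
      exact mem_of_isListPrefix (hpy (n+1)) (hL₂ y hy) a
        (by rw [blocksConcat_succ]; exact List.mem_append_right _ ha)
    have hfil₁ : ∀ N, (blocksConcat (fun i => xs i ++ ys i) N).filter
        (fun a => decide (a ∈ S₁)) = blocksConcat xs N := by
      intro N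
      induction N with
      | zero => simp [blocksConcat]
      | succ N ih =>
        rw [blocksConcat_succ, List.filter_append, ih, blocksConcat_succ]
        congr 1
        rw [List.filter_append,
          List.filter_eq_self.mpr (fun a ha => by simpa using hxS N a ha),
          List.filter_eq_nil_iff.mpr
            (fun a ha => by simpa using fun h => hdis.ne_of_mem h (hyS N a ha) rfl)]
        simp
    have hfil₂ : ∀ N, (blocksConcat (fun i => xs i ++ ys i) N).filter
        (fun a => decide (a ∈ S₂)) = blocksConcat ys N := by
      intro N
      induction N with
      | zero => simp [blocksConcat]
      | succ N ih =>
        rw [blocksConcat_succ, List.filter_append, ih, blocksConcat_succ]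
        congr 1
        rw [List.filter_append,
          List.filter_eq_nil_iff.mpr
            (fun a ha => by simpa using fun h => hdis.ne_of_mem (hxS N a ha) h rfl),
          List.filter_eq_self.mpr (fun a ha => by simpa using hyS N a ha)]
        simp
    have hproj : ∀ (S : Set α) (_ : DecidablePred (· ∈ S)) (bs : ℕ → List α),
        True := fun _ _ _ => trivial
    refine ⟨?_, ⟨x, hx, ?_⟩, ⟨y, hy, ?_⟩⟩
    · intro i
      obtain ⟨N, hN⟩ := hj2 i
      have := (hj1 N) i hN
      have hmemb : z i ∈ blocksConcat (fun i => xs i ++ ys i) N := by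
        rw [← this]; exact List.get_mem _ ⟨i, hN⟩
      obtain ⟨j, _, hj⟩ := mem_blocksConcat hmemb
      rcases List.mem_append.mp hj with h | h
      · exact Or.inl (hxS j _ h)
      · exact Or.inr (hyS j _ h)
    · intro n
      obtain ⟨N, hN⟩ := hj2 n
      have hpre : firstN z n <+: blocksConcat (fun i => xs i ++ ys i) N :=
        prefix_of_isListPrefix (isListPrefix_firstN z n) (hj1 N)
          (by rw [length_firstN]; omega)
      have := hpre.filter (fun a => decide (a ∈ S₁))
      rw [hfil₁ N] at this
      exact isListPrefix_of_prefix this (hpx N)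
    · intro n
      obtain ⟨N, hN⟩ := hj2 n
      have hpre : firstN z n <+: blocksConcat (fun i => xs i ++ ys i) N :=
        prefix_of_isListPrefix (isListPrefix_firstN z n) (hj1 N)
          (by rw [length_firstN]; omega)
      have := hpre.filter (fun a => decide (a ∈ S₂))
      rw [hfil₂ N] at this
      exact isListPrefix_of_prefix this (hpy N)
end

section
/- (Soundness of abstraction) For every infinite path c₀ →_{t₁} c₁ →_{t₂} c₂ ⋯ of the concrete transition system TS of a non-atomic (FSM,FSM)-network, there exists an infinite path a₀ →_{t₁} a₁ →_{t₂} a₂ ⋯ of the abstract transition system αTS, with the same transition labels, such that cᵢ ∈ γ(aᵢ) for all i ≥ 0. -/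
/-- A read or write action on the shared register. -/
inductive RW (G : Type) where
  | read (g : G) | write (g : G)

/-- A population over the set `Q_C` of contributor states. -/
abbrev Population (QC : Type) := QC → ℕ

/-- A concrete configuration: leader state, register value (`none` = `#`,
uninitialized), and population of contributor states. -/
abbrev Conf (QD QC G : Type) := QD × Option G × Population QC

/-- An abstract configuration: leader state, register value, set of populated
contributor states. -/
abbrev AConf (QD QC G : Type) := QD × Option G × Set QC

/-- A transition label: a leader transition or a contributor transition. -/
abbrev TLabel (QD QC G : Type) := (QD × RW G × QD) ⊕ (QC × RW G × QC)

/-- Effect of the action `a` on the register: a write sets the register,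
a read requires the register to hold the value read and leaves it unchanged. -/
def regOK {G : Type} (g : Option G) (a : RW G) (g' : Option G) : Prop :=
  match a with
  | .write h => g' = some h
  | .read h => g = some h ∧ g' = g

/-- The concrete transition relation of the non-atomic network: a single leader
step, or a single contributor moving from `q` to `q'` (requiring `p q ≥ 1` and
updating the population as `p' = p − q + q'`). -/
def CStep {QD QC G : Type} [DecidableEq QC]
    (δD : Set (QD × RW G × QD)) (δC : Set (QC × RW G × QC)) :
    Conf QD QC G → TLabel QD QC G → Conf QD QC G → Prop
  | (qD, g, p), .inl (q, a, q'), (qD', g', p') =>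
      (q, a, q') ∈ δD ∧ qD = q ∧ qD' = q' ∧ p' = p ∧ regOK g a g'
  | (qD, g, p), .inr (q, a, q'), (qD', g', p') =>
      (q, a, q') ∈ δC ∧ qD' = qD ∧ 1 ≤ p q ∧
      (p' = fun x => p x - (if x = q then 1 else 0) + (if x = q' then 1 else 0)) ∧
      regOK g a g'

/-- Abstraction: the set of states populated by some population of `P`. -/
def alphaP {QC : Type} (P : Set (Population QC)) : Set QC :=
  {q | ∃ p ∈ P, 1 ≤ p q}

/-- Concretization: populations that only populate states of `Q`. -/
def gammaP {QC : Type} (Q : Set QC) : Set (Population QC) :=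
  {p | ∀ q ∉ Q, p q = 0}

/-- The abstract transition relation: `(q_D,g,Q) →_t (q_D′,g′,Q′)` iff some
`p ∈ γ(Q)` has a concrete `t`-transition, and `Q′` is the abstraction of the set
of all populations reachable from `γ(Q)` by a `t`-transition. -/
def AStep {QD QC G : Type} [DecidableEq QC]
    (δD : Set (QD × RW G × QD)) (δC : Set (QC × RW G × QC))
    (a : AConf QD QC G) (t : TLabel QD QC G) (a' : AConf QD QC G) : Prop :=
  (∃ p ∈ gammaP a.2.2, ∃ p', CStep δD δC (a.1, a.2.1, p) t (a'.1, a'.2.1, p')) ∧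
  a'.2.2 = alphaP {p' | ∃ p ∈ gammaP a.2.2, CStep δD δC (a.1, a.2.1, p) t (a'.1, a'.2.1, p')}

/-- **Soundness of the abstraction.** For every infinite path of the concrete
transition system there is an infinite path of the abstract transition system
with the same transition labels such that `cᵢ ∈ γ(aᵢ)` for all `i`. -/
theorem abstraction_sound {QD QC G : Type} [DecidableEq QC]
    (δD : Set (QD × RW G × QD)) (δC : Set (QC × RW G × QC))
    (c : ℕ → Conf QD QC G) (t : ℕ → TLabel QD QC G)
    (hpath : ∀ i, CStep δD δC (c i) (t i) (c (i + 1))) :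
    ∃ a : ℕ → AConf QD QC G,
      (∀ i, AStep δD δC (a i) (t i) (a (i + 1))) ∧
      (∀ i, (c i).1 = (a i).1 ∧ (c i).2.1 = (a i).2.1 ∧ (c i).2.2 ∈ gammaP (a i).2.2) := by
  -- Define the sets of populated states recursively.
  let Q : ℕ → Set QC := fun i => Nat.rec {q | 1 ≤ (c 0).2.2 q}
    (fun i Qi => alphaP {p' | ∃ p ∈ gammaP Qi,
      CStep δD δC ((c i).1, (c i).2.1, p) (t i) ((c (i+1)).1, (c (i+1)).2.1, p')}) i
  have hstep : ∀ i, CStep δD δC ((c i).1, (c i).2.1, (c i).2.2) (t i)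
      ((c (i+1)).1, (c (i+1)).2.1, (c (i+1)).2.2) := fun i => hpath i
  have hgamma : ∀ i, (c i).2.2 ∈ gammaP (Q i) := by
    intro i
    induction i with
    | zero =>
      intro q hq
      exact Nat.eq_zero_of_not_pos fun h => hq h
    | succ i ih =>
      intro q hq
      by_contra h
      exact hq ⟨(c (i+1)).2.2, ⟨(c i).2.2, ih, hstep i⟩, by omega⟩
  refine ⟨fun i => ((c i).1, (c i).2.1, Q i), fun i => ?_, fun i => ⟨rfl, rfl, hgamma i⟩⟩
  exact ⟨⟨(c i).2.2, hgamma i, (c (i+1)).2.2, hstep i⟩, rfl⟩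
end

section
/- (Covering Lemma) Let (q_D, g, Q) be an abstract configuration reachable in αTS from the initial abstract configuration (q_{0D}, #, {q_{0C}}). Then for every population p ∈ γ(Q), there exists a population p̂ ≥ p (componentwise) such that (q_D, g, p̂) is reachable in TS from some initial concrete configuration (q_{0D}, #, k·q_{0C}) with k ≥ 1. -/
/-- Reachability in the concrete transition system. -/
def CReach {QD QC G : Type} [DecidableEq QC]
    (δD : Set (QD × RW G × QD)) (δC : Set (QC × RW G × QC)) :
    Conf QD QC G → Conf QD QC G → Prop :=
  Relation.ReflTransGen (fun c c' => ∃ t, CStep δD δC c t c')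

/-- Reachability in the abstract transition system. -/
def AReach {QD QC G : Type} [DecidableEq QC]
    (δD : Set (QD × RW G × QD)) (δC : Set (QC × RW G × QC)) :
    AConf QD QC G → AConf QD QC G → Prop :=
  Relation.ReflTransGen (fun a a' => ∃ t, AStep δD δC a t a')

/-- The initial concrete configuration with `k` contributors, all in `q0C`. -/
def initConf {QD QC G : Type} [DecidableEq QC] (q0D : QD) (q0C : QC) (k : ℕ) :
    Conf QD QC G :=
  (q0D, none, fun q => if q = q0C then k else 0)

lemma regOK_step {G : Type} {g g' : Option G} {a : RW G} (h : regOK g a g') :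
    regOK g' a g' := by
  cases a with
  | read x => exact ⟨h.2 ▸ h.1, rfl⟩
  | write x => exact h

lemma fireN {QD QC G : Type} [DecidableEq QC]
    (δD : Set (QD × RW G × QD)) (δC : Set (QC × RW G × QC))
    (qD : QD) (q q' : QC) (a : RW G) (hmem : (q, a, q') ∈ δC) :
    ∀ (n : ℕ) (g g' : Option G) (p : Population QC), regOK g a g' → n + 1 ≤ p q →
    CReach δD δC (qD, g, p)
      (qD, g', fun x => p x - (if x = q then n + 1 else 0) + (if x = q' then n + 1 else 0)) := by
  intro n
  induction n with
  | zero =>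
    intro g g' p hreg hq
    exact Relation.ReflTransGen.single ⟨.inr (q, a, q'), hmem, rfl, hq, rfl, hreg⟩
  | succ n ih =>
    intro g g' p hreg hq
    set p1 : Population QC :=
      fun x => p x - (if x = q then 1 else 0) + (if x = q' then 1 else 0) with hp1
    have step1 : CStep δD δC (qD, g, p) (.inr (q, a, q')) (qD, g', p1) :=
      ⟨hmem, rfl, le_trans (by omega) hq, rfl, hreg⟩
    have hq1 : n + 1 ≤ p1 q := by
      have e : p1 q = p q - 1 + (if q = q' then 1 else 0) := by
        simp only [hp1, eq_self_iff_true, if_true]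
      rcases eq_or_ne q q' with h | h
      · rw [if_pos h] at e; omega
      · rw [if_neg h] at e; omega
    have htail := ih g' g' p1 (regOK_step hreg) hq1
    have hfun : (fun x => p1 x - (if x = q then n + 1 else 0) + (if x = q' then n + 1 else 0))
        = fun x => p x - (if x = q then n + 1 + 1 else 0) + (if x = q' then n + 1 + 1 else 0) := by
      funext x
      rcases eq_or_ne x q with h1 | h1
      · rcases eq_or_ne x q' with h2 | h2
        · have hx : n + 1 + 1 ≤ p x := by rw [h1]; exact hq
          simp only [hp1, if_pos h1, if_pos h2]; omega
        · simp only [hp1, if_pos h1, if_neg h2]; omega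
      · rcases eq_or_ne x q' with h2 | h2
        · simp only [hp1, if_neg h1, if_pos h2]; omega
        · simp only [hp1, if_neg h1, if_neg h2]; omega
    rw [hfun] at htail
    exact Relation.ReflTransGen.head ⟨_, step1⟩ htail

lemma cover_aux {QD QC G : Type} [DecidableEq QC]
    (δD : Set (QD × RW G × QD)) (δC : Set (QC × RW G × QC))
    (q0D : QD) (q0C : QC) :
    ∀ c : AConf QD QC G,
      AReach δD δC (q0D, (none : Option G), ({q0C} : Set QC)) c →
      ∀ p ∈ gammaP c.2.2, ∃ (k : ℕ) (phat : Population QC), 1 ≤ k ∧ (∀ q, p q ≤ phat q) ∧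
        CReach δD δC (initConf q0D q0C k) (c.1, c.2.1, phat) := by
  intro c hc
  induction hc with
  | refl =>
    intro p hp
    refine ⟨p q0C + 1, fun x => if x = q0C then p q0C + 1 else 0, by omega, ?_, ?_⟩
    · intro x
      by_cases hx : x = q0C
      · subst hx; simp
      · have : p x = 0 := hp x (by simp [hx])
        simp [hx, this]
    · exact Relation.ReflTransGen.refl
  | @tail b c hreach hstep ih =>
    obtain ⟨t, hA⟩ := hstep
    obtain ⟨⟨p0, hp0, p0', hC0⟩, hQ⟩ := hA
    cases t with
    | inl tr =>
      obtain ⟨ql, a, ql'⟩ := tr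
      obtain ⟨hδ, h1, h2, h3, h4⟩ := hC0
      intro p hp
      have hpb : p ∈ gammaP b.2.2 := by
        intro x hx
        apply hp
        intro hxc
        rw [hQ] at hxc
        obtain ⟨pw, ⟨pb, hpb, hCw⟩, hpw⟩ := hxc
        obtain ⟨-, -, -, hw, -⟩ := hCw
        rw [hw] at hpw
        rw [hpb x hx] at hpw
        omega
      obtain ⟨k, phat, hk, hle, hR⟩ := ih p hpb
      exact ⟨k, phat, hk, hle,
        hR.tail ⟨.inl (ql, a, ql'), hδ, h1, h2, rfl, h4⟩⟩
    | inr tr =>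
      obtain ⟨q, a, q'⟩ := tr
      obtain ⟨hδ, h1, h2, h3, h4⟩ := hC0
      intro p hp
      have hqb : q ∈ b.2.2 := by
        by_contra hq
        have := hp0 q hq
        omega
      have hsupp : ∀ x, x ∉ b.2.2 → x ≠ q' → p x = 0 := by
        intro x hx hne
        apply hp
        intro hxc
        rw [hQ] at hxc
        obtain ⟨pw, ⟨pb, hpb, hCw⟩, hpw⟩ := hxc
        obtain ⟨-, -, -, hw, -⟩ := hCw
        rw [hw] at hpw
        simp only [hpb x hx, if_neg hne] at hpw
        rcases eq_or_ne x q with h | h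
        · simp only [if_pos h] at hpw; omega
        · simp only [if_neg h] at hpw; omega
      set m : ℕ := p q' + 1 with hm
      set pbig : Population QC :=
        fun x => (if x = q' then 0 else p x) + (if x = q then m else 0) with hpbig
      have hpbigγ : pbig ∈ gammaP b.2.2 := by
        intro x hx
        have hxq : x ≠ q := fun h => hx (h ▸ hqb)
        simp only [hpbig, if_neg hxq, add_zero]
        by_cases hx' : x = q' <;> simp [hx', hsupp x hx]
      obtain ⟨k, phat, hk, hle, hR⟩ := ih pbig hpbigγ
      have hleq : m ≤ phat q := by
        have h := hle q
        simp only [hpbig, eq_self_iff_true, if_true] at h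
        omega
      have hfire := fireN δD δC b.1 q q' a hδ (p q') b.2.1 c.2.1 phat h4 hleq
      refine ⟨k, fun x =>
          phat x - (if x = q then p q' + 1 else 0) + (if x = q' then p q' + 1 else 0),
          hk, ?_, ?_⟩
      · intro x
        have hx := hle x
        rcases eq_or_ne x q with h1' | h1'
        · rcases eq_or_ne x q' with h2' | h2'
          · have hpx : p x = p q' := by rw [h2']
            simp only [hpbig, if_pos h1', if_pos h2'] at hx ⊢
            omega
          · simp only [hpbig, if_pos h1', if_neg h2'] at hx ⊢
            omega
        · rcases eq_or_ne x q' with h2' | h2'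
          · have hpx : p x = p q' := by rw [h2']
            simp only [hpbig, if_neg h1', if_pos h2'] at hx ⊢
            omega
          · simp only [hpbig, if_neg h1', if_neg h2'] at hx ⊢
            omega
      · rw [h1]
        exact hR.trans hfire

/-- **Covering Lemma.** If the abstract configuration `(q_D, g, Q)` is reachable
from the initial abstract configuration `(q_{0D}, #, {q_{0C}})`, then for every
population `p ∈ γ(Q)` there is a population `p̂ ≥ p` such that `(q_D, g, p̂)` is
reachable in the concrete system from some initial configuration
`(q_{0D}, #, k·q_{0C})` with `k ≥ 1`. -/
theorem covering_lemma {QD QC G : Type} [DecidableEq QC]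
    (δD : Set (QD × RW G × QD)) (δC : Set (QC × RW G × QC))
    (q0D : QD) (q0C : QC) (qD : QD) (g : Option G) (Q : Set QC)
    (hreach : AReach δD δC (q0D, (none : Option G), ({q0C} : Set QC)) (qD, g, Q)) :
    ∀ p ∈ gammaP Q, ∃ (k : ℕ) (phat : Population QC), 1 ≤ k ∧ (∀ q, p q ≤ phat q) ∧
      CReach δD δC (initConf q0D q0C k) (qD, g, phat) := by
  exact cover_aux δD δC q0D q0C (qD, g, Q) hreach
end

section
/- (Realizability of abstract cycles) A cycle a₀ →_{t₁} a₁ →_{t₂} ⋯ →_{t_n} a_n (with a_n = a₀) of the abstract transition system αTS is realizable if and only if Σ_{i=1}^{n} Δ(tᵢ) = 0, where Δ(t) is the population displacement of transition t. -/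
/-- The population displacement `Δ(t)` of a transition label: `0` for leader
transitions, `−q + q′` for a contributor transition from `q` to `q′`. -/
def disp {QD QC G : Type} [DecidableEq QC] : TLabel QD QC G → QC → ℤ
  | .inl _ => fun _ => 0
  | .inr (q, _, q') => fun x => (if x = q' then 1 else 0) - (if x = q then 1 else 0)

/-- A cycle `a₀ →_{t₀} a₁ →_{t₁} ⋯ →_{t_{n−1}} a_n = a₀` of the abstract system is
realizable if there is an infinite concrete path `c₀ →_{t′₀} c₁ →_{t′₁} ⋯` with
`c_k ∈ γ(a_{k mod n})` and `t′_k = t_{k mod n}` for every `k`. -/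
def Realizable {QD QC G : Type} [DecidableEq QC]
    (δD : Set (QD × RW G × QD)) (δC : Set (QC × RW G × QC))
    (n : ℕ) (a : ℕ → AConf QD QC G) (t : ℕ → TLabel QD QC G) : Prop :=
  ∃ c : ℕ → Conf QD QC G,
    (∀ k, CStep δD δC (c k) (t (k % n)) (c (k + 1))) ∧
    (∀ k, (c k).1 = (a (k % n)).1 ∧ (c k).2.1 = (a (k % n)).2.1 ∧
      (c k).2.2 ∈ gammaP (a (k % n)).2.2)

section Aux
variable {QD QC G : Type} [DecidableEq QC]

lemma disp_neg_one_le (tl : TLabel QD QC G) (x : QC) : -1 ≤ disp tl x := by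
  rcases tl with tl | ⟨q, act, q'⟩
  · simp [disp]
  · simp only [disp]; split <;> split <;> omega

lemma disp_sum_univ [Fintype QC] (tl : TLabel QD QC G) : (∑ x, disp tl x) = 0 := by
  rcases tl with tl | ⟨q, act, q'⟩
  · simp [disp]
  · simp [disp, Finset.sum_sub_distrib]

lemma cstep_int_eq (δD : Set (QD × RW G × QD)) (δC : Set (QC × RW G × QC))
    {c c' : Conf QD QC G} {tl : TLabel QD QC G} (h : CStep δD δC c tl c') (x : QC) :
    ((c'.2.2 x : ℤ)) = c.2.2 x + disp tl x := by
  rcases tl with ⟨q, act, q'⟩ | ⟨q, act, q'⟩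
  · obtain ⟨-, -, -, h4, -⟩ := h
    simp [disp, h4]
  · obtain ⟨-, -, hq, h4, -⟩ := h
    have h1 : (if x = q then 1 else 0) ≤ c.2.2 x := by
      split
      · next hx => rw [hx]; exact hq
      · exact Nat.zero_le _
    rw [h4]
    simp only [disp]
    push_cast [h1]
    ring

end Aux

section Aux2
variable {QD QC G : Type} [DecidableEq QC]

/-- Partial sums of displacements along the (periodically repeated) cycle. -/
def Ssum (t : ℕ → TLabel QD QC G) (n k : ℕ) (x : QC) : ℤ :=
  ∑ j ∈ Finset.range k, disp (t (j % n)) x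

lemma Ssum_succ (t : ℕ → TLabel QD QC G) (n k : ℕ) (x : QC) :
    Ssum t n (k+1) x = Ssum t n k x + disp (t (k % n)) x :=
  Finset.sum_range_succ _ _

lemma Ssum_block (t : ℕ → TLabel QD QC G) {n : ℕ} (hn : 0 < n) (k : ℕ) (x : QC) :
    Ssum t n (k + n) x = Ssum t n k x + (∑ i ∈ Finset.range n, disp (t i)) x := by
  induction k with
  | zero =>
    simp only [Nat.zero_add, Ssum, Finset.sum_apply]
    rw [Finset.range_zero, Finset.sum_empty, zero_add]
    exact Finset.sum_congr rfl fun j hj => by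
      rw [Nat.mod_eq_of_lt (Finset.mem_range.mp hj)]
  | succ k ih =>
    have e : k + 1 + n = (k + n) + 1 := by omega
    rw [e, Ssum_succ, ih, Ssum_succ]
    have : (k + n) % n = k % n := Nat.add_mod_right k n
    rw [this]; ring

lemma Ssum_low (t : ℕ → TLabel QD QC G) (n : ℕ) (k : ℕ) (x : QC) :
    -(k : ℤ) ≤ Ssum t n k x := by
  induction k with
  | zero => simp [Ssum]
  | succ k ih =>
    rw [Ssum_succ]
    have := disp_neg_one_le (t (k % n)) x
    push_cast
    omega

end Aux2

section Aux3
variable {QD QC G : Type} [DecidableEq QC]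

/-- The population used to realize an abstract cycle. -/
noncomputable def Pfun (Q : Set QC) (t : ℕ → TLabel QD QC G) (n k : ℕ) (x : QC) : ℕ :=
  (Q.indicator (fun _ => (n : ℤ) + 1) x + Ssum t n k x).toNat

end Aux3

/-- **Realizability of abstract cycles.** A cycle
`a₀ →_{t₀} a₁ →_{t₁} ⋯ →_{t_{n−1}} a_n = a₀` of the abstract transition system is
realizable iff the displacements of its transitions sum to `0`. -/
theorem cycle_realizable_iff {QD QC G : Type} [DecidableEq QC] [Fintype QC]
    (δD : Set (QD × RW G × QD)) (δC : Set (QC × RW G × QC))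
    (n : ℕ) (a : ℕ → AConf QD QC G) (t : ℕ → TLabel QD QC G)
    (hn : 1 ≤ n)
    (hcycle : ∀ i < n, AStep δD δC (a i) (t i) (a (i + 1)))
    (hclosed : a n = a 0) :
    Realizable δD δC n a t ↔ (∑ i ∈ Finset.range n, disp (t i)) = 0 := by
  constructor
  · -- realizable → displacement sum is zero
    classical
    rintro ⟨c, hstep, hmem⟩
    set D : QC → ℤ := ∑ i ∈ Finset.range n, disp (t i) with hD
    have key : ∀ k x, ((c k).2.2 x : ℤ) = (c 0).2.2 x + Ssum t n k x := by
      intro k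
      induction k with
      | zero => intro x; simp [Ssum]
      | succ k ih =>
        intro x
        rw [cstep_int_eq δD δC (hstep k) x, ih x, Ssum_succ]
        ring
    have hblock : ∀ x m, Ssum t n (m * n) x = m * D x := by
      intro x m
      induction m with
      | zero => simp [Ssum]
      | succ m ih =>
        have e : (m + 1) * n = m * n + n := by ring
        rw [e, Ssum_block t hn, ih]
        push_cast
        ring
    have hDnonneg : ∀ x, 0 ≤ D x := by
      intro x
      by_contra hneg
      push_neg at hneg
      have hle : D x ≤ -1 := by omega
      set m : ℕ := (c 0).2.2 x + 1 with hm
      have h0 : (0:ℤ) ≤ ((c (m * n)).2.2 x : ℤ) := Int.natCast_nonneg _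
      rw [key, hblock] at h0
      have hmz : (m : ℤ) = ((c 0).2.2 x : ℤ) + 1 := by push_cast [hm]; ring
      nlinarith [Int.natCast_nonneg ((c 0).2.2 x)]
    have htot : (∑ x, D x) = 0 := by
      rw [hD]
      simp only [Finset.sum_apply]
      rw [Finset.sum_comm]
      simp [disp_sum_univ]
    have hall := (Finset.sum_eq_zero_iff_of_nonneg (fun x _ => hDnonneg x)).mp htot
    funext x
    exact hall x (Finset.mem_univ x)
  · -- displacement sum is zero → realizable
    intro hsum
    classical
    have hn0 : 0 < n := hn
    -- the abstract population sets are constant along the cycle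
    have hmono : ∀ i, i < n → (a i).2.2 ⊆ (a (i+1)).2.2 := by
      intro i hi q hq
      obtain ⟨⟨p0, hp0, p0', hst⟩, hQ⟩ := hcycle i hi
      rw [hQ]
      rcases ht : t i with ⟨qd, act, qd'⟩ | ⟨qs, act, qt⟩ <;> rw [ht] at hst
      · obtain ⟨hmemδ, h1, h2, -, hreg⟩ := hst
        refine ⟨fun x => if x = q then 1 else 0, ⟨fun x => if x = q then 1 else 0,
          fun y hy => by
            rcases eq_or_ne y q with h | h
            · exact absurd (h ▸ hq) hy
            · simp [h], hmemδ, h1, h2, rfl, hreg⟩, by simp⟩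
      · obtain ⟨hmemδ, h1, hge, -, hreg⟩ := hst
        have hqs : qs ∈ (a i).2.2 := by
          by_contra hc
          rw [hp0 qs hc] at hge; omega
        refine ⟨fun x => ((if x = q then 2 else 0) + (if x = qs then 2 else 0))
              - (if x = qs then 1 else 0) + (if x = qt then 1 else 0),
            ⟨fun x => (if x = q then 2 else 0) + (if x = qs then 2 else 0),
              fun y hy => by
                rcases eq_or_ne y q with h | h
                · exact absurd (h ▸ hq) hy
                rcases eq_or_ne y qs with h' | h'
                · exact absurd (h' ▸ hqs) hy
                simp [h, h'],
              hmemδ, h1, by simp, rfl, hreg⟩, ?_⟩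
        by_cases h1 : q = qs <;> by_cases h2 : q = qt <;>
          by_cases h3 : qs = qt <;> simp [h1, h2, h3]
    have hQle : ∀ i j, i ≤ j → j ≤ n → (a i).2.2 ⊆ (a j).2.2 := by
      intro i j hij hjn
      induction j with
      | zero => rw [Nat.le_zero.mp hij]
      | succ j ih =>
        rcases Nat.lt_or_ge i (j+1) with h | h
        · exact (ih (by omega) (by omega)).trans (hmono j (by omega))
        · have : i = j + 1 := by omega
          rw [this]
    have hQeq : ∀ i, i ≤ n → (a i).2.2 = (a 0).2.2 := by
      intro i hi
      refine Set.Subset.antisymm ?_ (hQle 0 i (Nat.zero_le _) hi)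
      rw [← hclosed]
      exact hQle i n hi le_rfl
    -- displacements are supported inside `Q := (a 0).2.2`
    have hsupp : ∀ i, i < n → ∀ x, x ∉ (a 0).2.2 → disp (t i) x = 0 := by
      intro i hi x hx
      obtain ⟨⟨p0, hp0, p0', hst⟩, hQ⟩ := hcycle i hi
      rcases ht : t i with ⟨qd, act, qd'⟩ | ⟨qs, act, qt⟩
      · simp [disp]
      rw [ht] at hst
      obtain ⟨hmemδ, h1, hge, hpop, hreg⟩ := hst
      have hqs : qs ∈ (a 0).2.2 := by
        rw [← hQeq i (le_of_lt hi)]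
        by_contra hc
        rw [hp0 qs hc] at hge; omega
      have hqt : qt ∈ (a 0).2.2 := by
        rw [← hQeq (i+1) hi]
        rw [hQ]
        refine ⟨p0', ⟨p0, hp0, ht ▸ ⟨hmemδ, h1, hge, hpop, hreg⟩⟩, ?_⟩
        rw [hpop]; simp
      have h1 : x ≠ qs := fun h => hx (h ▸ hqs)
      have h2 : x ≠ qt := fun h => hx (h ▸ hqt)
      simp [disp, h1, h2]
    -- partial displacement sums
    have hSper : ∀ k x, Ssum t n (k + n) x = Ssum t n k x := by
      intro k x
      rw [Ssum_block t hn0, hsum]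
      simp
    have hSmod : ∀ k x, Ssum t n k x = Ssum t n (k % n) x := by
      intro k
      induction k using Nat.strong_induction_on with
      | _ k ih =>
        intro x
        by_cases hk : k < n
        · rw [Nat.mod_eq_of_lt hk]
        · have e : k = (k - n) + n := by omega
          calc Ssum t n k x = Ssum t n ((k - n) + n) x := by rw [← e]
            _ = Ssum t n (k - n) x := hSper _ x
            _ = Ssum t n ((k - n) % n) x := ih _ (by omega) x
            _ = Ssum t n (k % n) x := by rw [show k % n = ((k-n)+n) % n by rw [← e],
                  Nat.add_mod_right]
    have hSzero : ∀ k x, x ∉ (a 0).2.2 → Ssum t n k x = 0 := by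
      intro k x hx
      refine Finset.sum_eq_zero fun j _ => hsupp _ (Nat.mod_lt _ hn0) x hx
    have hVpos : ∀ k x, x ∈ (a 0).2.2 →
        1 ≤ (a 0).2.2.indicator (fun _ => (n : ℤ) + 1) x + Ssum t n k x := by
      intro k x hx
      rw [Set.indicator_of_mem hx, hSmod]
      have h1 := Ssum_low t n (k % n) x
      have h2 : k % n < n := Nat.mod_lt _ hn0
      have h3 : ((k % n : ℕ) : ℤ) < (n : ℤ) := by exact_mod_cast h2
      omega
    have hVnn : ∀ k x, 0 ≤ (a 0).2.2.indicator (fun _ => (n : ℤ) + 1) x + Ssum t n k x := by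
      intro k x
      by_cases hx : x ∈ (a 0).2.2
      · exact le_trans (by omega) (hVpos k x hx)
      · rw [Set.indicator_of_notMem hx, hSzero k x hx]; norm_num
    have hPcast : ∀ k x, ((Pfun (a 0).2.2 t n k x : ℕ) : ℤ)
        = (a 0).2.2.indicator (fun _ => (n : ℤ) + 1) x + Ssum t n k x := by
      intro k x
      exact Int.toNat_of_nonneg (hVnn k x)
    have hPzero : ∀ k x, x ∉ (a 0).2.2 → Pfun (a 0).2.2 t n k x = 0 := by
      intro k x hx
      have : ((Pfun (a 0).2.2 t n k x : ℕ) : ℤ) = 0 := by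
        rw [hPcast, Set.indicator_of_notMem hx, hSzero k x hx]; norm_num
      exact_mod_cast this
    -- the concrete realization
    refine ⟨fun k => ((a (k % n)).1, (a (k % n)).2.1, Pfun (a 0).2.2 t n k), ?_, ?_⟩
    · intro k
      have hi : k % n < n := Nat.mod_lt _ hn0
      have hk1 : (k + 1) % n = (k % n + 1) % n := by simp [Nat.add_mod]
      have hanext : a ((k + 1) % n) = a (k % n + 1) := by
        rcases Nat.lt_or_ge (k % n + 1) n with h | h
        · rw [hk1, Nat.mod_eq_of_lt h]
        · have hh : k % n + 1 = n := by omega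
          rw [hk1, hh, Nat.mod_self, hclosed]
      show CStep δD δC ((a (k % n)).1, (a (k % n)).2.1, Pfun (a 0).2.2 t n k)
        (t (k % n)) ((a ((k+1) % n)).1, (a ((k+1) % n)).2.1, Pfun (a 0).2.2 t n (k+1))
      rw [hanext]
      obtain ⟨⟨p0, hp0, p0', hst⟩, -⟩ := hcycle (k % n) hi
      rcases ht : t (k % n) with ⟨qd, act, qd'⟩ | ⟨qs, act, qt⟩ <;> rw [ht] at hst
      · obtain ⟨hmemδ, h1, h2, -, hreg⟩ := hst
        refine ⟨hmemδ, h1, h2, ?_, hreg⟩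
        funext x
        have : ((Pfun (a 0).2.2 t n (k+1) x : ℕ) : ℤ) = ((Pfun (a 0).2.2 t n k x : ℕ) : ℤ) := by
          rw [hPcast, hPcast, Ssum_succ, ht]
          simp [disp]
        exact_mod_cast this
      · obtain ⟨hmemδ, h1, hge, -, hreg⟩ := hst
        have hqs : qs ∈ (a 0).2.2 := by
          rw [← hQeq (k % n) (le_of_lt hi)]
          by_contra hc
          rw [hp0 qs hc] at hge; omega
        refine ⟨hmemδ, h1, ?_, ?_, hreg⟩
        · have h1' := hVpos k qs hqs
          have h2' := hPcast k qs
          omega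
        · funext x
          have e1 : ((Pfun (a 0).2.2 t n (k+1) x : ℕ) : ℤ)
              = ((Pfun (a 0).2.2 t n k x : ℕ) : ℤ)
                + ((if x = qt then 1 else 0) - (if x = qs then 1 else 0)) := by
            rw [hPcast, hPcast, Ssum_succ, ht]
            simp only [disp]
            ring
          have e2 : x = qs → 1 ≤ Pfun (a 0).2.2 t n k x := by
            intro h
            subst h
            have h1' := hVpos k x hqs
            have h2' := hPcast k x
            omega
          have e2' : (if x = qs then 1 else 0 : ℕ) ≤ Pfun (a 0).2.2 t n k x := by
            split
            · next h => exact e2 h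
            · exact Nat.zero_le _
          zify [e2']
          rw [e1]
          split_ifs <;> ring
    · intro k
      refine ⟨rfl, rfl, fun x hx => ?_⟩
      have hQk : (a (k % n)).2.2 = (a 0).2.2 := hQeq _ (le_of_lt (Nat.mod_lt _ hn0))
      rw [hQk] at hx
      exact hPzero k x hx
end

section
/- (Necessity direction of realizability) If a cycle a₀ →_{t₁} ⋯ →_{t_n} a_n = a₀ of αTS is realizable by an infinite concrete path c₀ →_{t₁} c₁ ⋯ in which all populations have the same finite size, then Σ_{i=1}^{n} Δ(tᵢ) = 0. -/
/-- **Necessity direction of realizability.** If a cycle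
`a₀ →_{t₀} ⋯ →_{t_{n−1}} a_n = a₀` of the abstract system is realized by an infinite
concrete path all of whose populations have the same finite size, then the
displacements of the cycle transitions sum to `0`. -/
theorem cycle_realizable_necessity {QD QC G : Type} [DecidableEq QC] [Fintype QC]
    (δD : Set (QD × RW G × QD)) (δC : Set (QC × RW G × QC))
    (n : ℕ) (a : ℕ → AConf QD QC G) (t : ℕ → TLabel QD QC G)
    (c : ℕ → Conf QD QC G)
    (hn : 1 ≤ n)
    (hcycle : ∀ i < n, AStep δD δC (a i) (t i) (a (i + 1)))
    (hclosed : a n = a 0)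
    (hsteps : ∀ k, CStep δD δC (c k) (t (k % n)) (c (k + 1)))
    (hgamma : ∀ k, (c k).1 = (a (k % n)).1 ∧ (c k).2.1 = (a (k % n)).2.1 ∧
      (c k).2.2 ∈ gammaP (a (k % n)).2.2)
    (hsize : ∀ k, (∑ q, (c k).2.2 q) = ∑ q, (c 0).2.2 q) :
    (∑ i ∈ Finset.range n, disp (t i)) = 0 := by
  -- pointwise step equation
  have hstep : ∀ k x, ((c (k+1)).2.2 x : ℤ) = (c k).2.2 x + disp (t (k % n)) x := by
    intro k x
    have h := hsteps k
    rcases hck : c k with ⟨qD, g, p⟩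
    rcases hck1 : c (k+1) with ⟨qD', g', p'⟩
    rw [hck, hck1] at h
    cases ht : t (k % n) with
    | inl l =>
      rcases l with ⟨q, ac, q'⟩
      rw [ht] at h
      obtain ⟨_, _, _, hp, _⟩ := h
      simp [hck, hck1, hp, disp]
    | inr l =>
      rcases l with ⟨q, ac, q'⟩
      rw [ht] at h
      obtain ⟨_, _, hq, hp, _⟩ := h
      simp only [hck, hck1, hp, disp]
      by_cases hxq : x = q
      · have hq' : 1 ≤ p x := by rw [hxq]; exact hq
        by_cases hxq' : x = q'
        · simp only [if_pos hxq, if_pos hxq']; omega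
        · simp only [if_pos hxq, if_neg hxq']; omega
      · by_cases hxq' : x = q'
        · simp only [if_neg hxq, if_pos hxq']; omega
        · simp only [if_neg hxq, if_neg hxq']; omega
  -- accumulated displacement
  have hacc : ∀ k x, ((c k).2.2 x : ℤ) =
      (c 0).2.2 x + ∑ i ∈ Finset.range k, disp (t (i % n)) x := by
    intro k
    induction k with
    | zero => simp
    | succ k ih =>
      intro x
      rw [Finset.sum_range_succ, hstep k x, ih x]
      ring
  -- sum over m full cycles
  have hcyc : ∀ m x, (∑ i ∈ Finset.range (m * n), disp (t (i % n)) x) =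
      m * ∑ i ∈ Finset.range n, disp (t i) x := by
    intro m x
    induction m with
    | zero => simp
    | succ m ih =>
      rw [Nat.succ_mul, Finset.sum_range_add, ih]
      have heq : (∑ i ∈ Finset.range n, disp (t ((m * n + i) % n)) x) =
          ∑ i ∈ Finset.range n, disp (t i) x := by
        apply Finset.sum_congr rfl
        intro i hi
        rw [show m * n + i = i + m * n by ring, Nat.add_mul_mod_self_right,
          Nat.mod_eq_of_lt (Finset.mem_range.mp hi)]
      rw [heq]
      push_cast
      ring
  -- each coordinate nonneg
  have hnonneg : ∀ x, 0 ≤ ∑ i ∈ Finset.range n, disp (t i) x := by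
    intro x
    by_contra h
    push_neg at h
    set m := (c 0).2.2 x + 1 with hm
    have hthis := hacc (m * n) x
    rw [hcyc m x] at hthis
    have hpos : (0:ℤ) ≤ (c (m * n)).2.2 x := Int.natCast_nonneg _
    rw [hthis] at hpos
    have h1 : (∑ i ∈ Finset.range n, disp (t i) x) ≤ -1 := by omega
    have h2 : (m : ℤ) * (∑ i ∈ Finset.range n, disp (t i) x) ≤ (m : ℤ) * (-1) :=
      mul_le_mul_of_nonneg_left h1 (by positivity)
    have h3 : ((c 0).2.2 x : ℤ) < (m : ℤ) := by
      rw [hm]; push_cast; omega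
    nlinarith
  -- sum of coordinates is zero
  have hsum : (∑ x, ∑ i ∈ Finset.range n, disp (t i) x) = 0 := by
    have h1 := hacc n
    have h2 := hsize n
    have h3 : (∑ x, ((c n).2.2 x : ℤ)) =
        ∑ x, ((c 0).2.2 x : ℤ) + ∑ x, ∑ i ∈ Finset.range n, disp (t i) x := by
      calc (∑ x, ((c n).2.2 x : ℤ))
          = ∑ x, ((c 0).2.2 x + ∑ i ∈ Finset.range n, disp (t (i % n)) x) :=
            Finset.sum_congr rfl fun x _ => h1 x
        _ = ∑ x, ((c 0).2.2 x : ℤ) + ∑ x, ∑ i ∈ Finset.range n, disp (t (i % n)) x := by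
            rw [Finset.sum_add_distrib]
        _ = ∑ x, ((c 0).2.2 x : ℤ) + ∑ x, ∑ i ∈ Finset.range n, disp (t i) x := by
            congr 1
            apply Finset.sum_congr rfl
            intro x _
            exact Finset.sum_congr rfl fun i hi => by
              rw [Nat.mod_eq_of_lt (Finset.mem_range.mp hi)]
    have h4 : (∑ x, ((c n).2.2 x : ℤ)) = ∑ x, ((c 0).2.2 x : ℤ) := by
      exact_mod_cast h2
    omega
  have hzero : ∀ x, (∑ i ∈ Finset.range n, disp (t i) x) = 0 := by
    intro x
    have := Finset.sum_eq_zero_iff_of_nonneg (fun x _ => hnonneg x) |>.mp hsum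
    exact this x (Finset.mem_univ x)
  funext x
  simpa [Finset.sum_apply] using hzero x
end

section
/- Every infinite run of a pushdown machine contains infinitely many positions at which the effective stack height is 1. -/
/-- `u` is a proper suffix of `v`. -/
def IsProperSuffix {Γ : Type*} (u v : List Γ) : Prop := u <:+ v ∧ u ≠ v

/-- In the infinite sequence of stacks `w`, `u` is a dark-suffix candidate at
position `i` if it is a proper suffix of `w (i+k)` for every `k ≥ 0`. The dark
suffix of `w i` is the longest such `u`. -/
def IsDarkSuffixCand {Γ : Type*} (w : ℕ → List Γ) (i : ℕ) (u : List Γ) : Prop :=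
  ∀ k, IsProperSuffix u (w (i + k))

/-- The effective stack height of the `i`-th configuration of a run with stack
sequence `w`: the length of the active prefix, i.e. `|w i|` minus the length of
the dark suffix of `w i`. -/
noncomputable def esh {Γ : Type*} (w : ℕ → List Γ) (i : ℕ) : ℕ :=
  (w i).length - sSup {n | ∃ u : List Γ, u.length = n ∧ IsDarkSuffixCand w i u}

/-- A sequence of stacks forms a PDM run: each step either pops the top symbol
or replaces the top symbol `γ` by `γ′γ` (a push). -/
def IsStackRun {Γ : Type*} (w : ℕ → List Γ) : Prop :=
  ∀ i, (∃ γ rest, w i = γ :: rest ∧ w (i + 1) = rest) ∨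
       (∃ γ γ' rest, w i = γ :: rest ∧ w (i + 1) = γ' :: γ :: rest)

lemma suffix_step {Γ : Type*} {w : ℕ → List Γ} (hrun : IsStackRun w) {u : List Γ} {i : ℕ}
    (hs : u <:+ w i) (hl : u.length < (w i).length) : u <:+ w (i + 1) := by
  rcases hrun i with ⟨γ, rest, h1, h2⟩ | ⟨γ, γ', rest, h1, h2⟩
  · rw [h1] at hs hl
    rw [h2]
    rcases hs with ⟨t, ht⟩
    match t with
    | [] =>
      simp only [List.nil_append] at ht
      rw [ht] at hl; exact absurd hl (lt_irrefl _)
    | a :: t' =>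
      rw [List.cons_append] at ht
      exact ⟨t', (List.cons.injEq _ _ _ _ ▸ ht).2⟩
  · rw [h2, ← h1]
    exact hs.trans (List.suffix_cons _ _)

lemma cand_of_suffix {Γ : Type*} {w : ℕ → List Γ} (hrun : IsStackRun w) {u : List Γ} {i : ℕ}
    (hs : u <:+ w i) (hl : ∀ k, u.length < (w (i + k)).length) :
    IsDarkSuffixCand w i u := by
  have key : ∀ k, u <:+ w (i + k) := by
    intro k
    induction k with
    | zero => rw [Nat.add_zero]; exact hs
    | succ k ih =>
      have := suffix_step hrun ih (hl k)
      rw [Nat.add_succ]; exact this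
  intro k
  refine ⟨key k, fun he => ?_⟩
  have := hl k
  rw [he] at this
  exact lt_irrefl _ this

/-- Every infinite run of a pushdown machine contains infinitely many positions
at which the effective stack height is `1`. -/
theorem esh_one_infinitely_often {Γ : Type*} (w : ℕ → List Γ)
    (hrun : IsStackRun w) (hne : ∀ i, 1 ≤ (w i).length) :
    ∀ n, ∃ i, n ≤ i ∧ esh w i = 1 := by
  intro n
  set S : Set ℕ := Set.range fun j => (w (n + j)).length with hS
  have hSne : S.Nonempty := ⟨(w (n + 0)).length, 0, rfl⟩
  obtain ⟨k0, hk0⟩ := Nat.sInf_mem hSne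
  set i := n + k0 with hi
  refine ⟨i, Nat.le_add_right _ _, ?_⟩
  have hk0' : (w (n + k0)).length = sInf S := hk0
  have hmin : ∀ k, (w i).length ≤ (w (i + k)).length := by
    intro k
    have hm : sInf S ≤ (w (n + (k0 + k))).length := Nat.sInf_le ⟨k0 + k, rfl⟩
    rw [hi, Nat.add_assoc, hk0']
    exact hm
  have hone : 1 ≤ (w i).length := hne i
  have hset : {m | ∃ u : List Γ, u.length = m ∧ IsDarkSuffixCand w i u}
      = Set.Iic ((w i).length - 1) := by
    ext m
    constructor
    · rintro ⟨u, hu, hcand⟩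
      have h0 := hcand 0
      simp only [Nat.add_zero] at h0
      have hlt : u.length < (w i).length := by
        rcases lt_or_eq_of_le h0.1.length_le with h | h
        · exact h
        · exact absurd (List.IsSuffix.eq_of_length h0.1 h) h0.2
      simp only [Set.mem_Iic]
      omega
    · intro hm
      simp only [Set.mem_Iic] at hm
      have hmlt : m < (w i).length := by omega
      refine ⟨(w i).drop ((w i).length - m), ?_, ?_⟩
      · rw [List.length_drop]; omega
      · apply cand_of_suffix hrun (List.drop_suffix _ _)
        intro k
        have : ((w i).drop ((w i).length - m)).length = m := by
          rw [List.length_drop]; omega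
        rw [this]
        exact lt_of_lt_of_le hmlt (hmin k)
  rw [esh, hset, csSup_Iic]
  omega
end

section
/- If an infinite word v admits an effectively k-bounded run in a PDM P, then v is accepted by the finite-state machine P_k (the k-restriction of P). -/
/-- A pushdown machine over input alphabet `A` with states `Q` and stack
alphabet `Γ`. A rule `(q, a, γ, q′, none)` pops `γ`; a rule `(q, a, γ, q′, some γ′)`
pushes `γ′` on top of `γ`. -/
structure PDM (Q Γ A : Type) where
  rules : Set (Q × A × Γ × Q × Option Γ)
  q0 : Q
  bot : Γ

/-- The transition relation on PDM-configurations (state and stack content). -/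
def PStep {Q Γ A : Type} (P : PDM Q Γ A) (c : Q × List Γ) (a : A) (c' : Q × List Γ) : Prop :=
  ∃ γ rest, c.2 = γ :: rest ∧
    (((c.1, a, γ, c'.1, (none : Option Γ)) ∈ P.rules ∧ c'.2 = rest) ∨
     (∃ γ', (c.1, a, γ, c'.1, some γ') ∈ P.rules ∧ c'.2 = γ' :: γ :: rest))

/-- `ρ` is a run of the PDM `P` on the ω-word `v`. -/
def IsRun {Q Γ A : Type} (P : PDM Q Γ A) (v : ℕ → A) (ρ : ℕ → Q × List Γ) : Prop :=
  ρ 0 = (P.q0, [P.bot]) ∧ ∀ i, PStep P (ρ i) (v i) (ρ (i + 1))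

/-- A run is effectively `k`-bounded if every configuration along it has
effective stack height at most `k`. -/
def EffKBounded {Q Γ : Type} (k : ℕ) (ρ : ℕ → Q × List Γ) : Prop :=
  ∀ i, esh (fun n => (ρ n).2) i ≤ k

/-- A transition of the `k`-restriction `P_k` of `P`: the states are pairs of a
state of `P` and a stack content of length between `1` and `k`; a transition
simulates a transition of `P` and truncates the resulting stack to its top `k`
symbols. -/
def KStep {Q Γ A : Type} (P : PDM Q Γ A) (k : ℕ)
    (s : Q × List Γ) (a : A) (s' : Q × List Γ) : Prop :=
  1 ≤ s.2.length ∧ s.2.length ≤ k ∧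
  ∃ w', PStep P s a (s'.1, w') ∧ s'.2 = w'.take k

/-- `σ` is an accepting run of the FSM `P_k` on the ω-word `v`. -/
def IsKRun {Q Γ A : Type} (P : PDM Q Γ A) (k : ℕ) (v : ℕ → A) (σ : ℕ → Q × List Γ) : Prop :=
  σ 0 = (P.q0, [P.bot]) ∧ ∀ i, KStep P k (σ i) (v i) (σ (i + 1))

namespace KBAux

variable {Γ : Type*}

/-- The set of lengths of dark-suffix candidates. -/
def dset (w : ℕ → List Γ) (i : ℕ) : Set ℕ :=
  {n | ∃ u : List Γ, u.length = n ∧ IsDarkSuffixCand w i u}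

lemma zero_mem_dset {w : ℕ → List Γ} (hne : ∀ j, w j ≠ []) (i : ℕ) : 0 ∈ dset w i :=
  ⟨[], rfl, fun k => ⟨List.nil_suffix, fun he => hne _ he.symm⟩⟩

lemma mem_dset_bound {w : ℕ → List Γ} {i m : ℕ} (hm : m ∈ dset w i) (j : ℕ) :
    m + 1 ≤ (w (i + j)).length := by
  obtain ⟨u, hu, hc⟩ := hm
  obtain ⟨hsuf, hneq⟩ := hc j
  have h1 : u.length ≤ (w (i + j)).length := hsuf.length_le
  rcases lt_or_eq_of_le h1 with hlt | heq
  · omega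
  · exact absurd (hsuf.eq_of_length heq) hneq

lemma dsup_bound {w : ℕ → List Γ} (hne : ∀ j, w j ≠ []) (i j : ℕ) :
    sSup (dset w i) + 1 ≤ (w (i + j)).length := by
  have hlen : 1 ≤ (w (i + j)).length := mem_dset_bound (zero_mem_dset hne i) j
  have : sSup (dset w i) ≤ (w (i + j)).length - 1 :=
    csSup_le ⟨0, zero_mem_dset hne i⟩ (fun m hm => by have := mem_dset_bound hm j; omega)
  omega

lemma dset_subset {w : ℕ → List Γ} (i : ℕ) : dset w i ⊆ dset w (i + 1) := by
  rintro m ⟨u, hu, hc⟩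
  exact ⟨u, hu, fun j => by
    have := hc (j + 1); rwa [show i + (j + 1) = i + 1 + j by omega] at this⟩

lemma dsup_mono {w : ℕ → List Γ} (hne : ∀ j, w j ≠ []) (i : ℕ) :
    sSup (dset w i) ≤ sSup (dset w (i + 1)) := by
  refine csSup_le ⟨0, zero_mem_dset hne i⟩ (fun m hm => le_csSup ?_ (dset_subset i hm))
  exact ⟨(w (i + 1)).length, fun x hx => by
    have := mem_dset_bound hx 0; simp at this; omega⟩

end KBAux

/-- If the ω-word `v` admits an effectively `k`-bounded run in the PDM `P`, then
`v` is accepted by the finite-state machine `P_k` (the `k`-restriction of `P`). -/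
theorem kbounded_run_accepted_by_restriction {Q Γ A : Type} (P : PDM Q Γ A) (k : ℕ)
    (v : ℕ → A)
    (h : ∃ ρ, IsRun P v ρ ∧ EffKBounded k ρ) :
    ∃ σ, IsKRun P k v σ := by
  classical
  obtain ⟨ρ, ⟨h0, hstep⟩, hbd⟩ := h
  set w : ℕ → List Γ := fun n => (ρ n).2 with hw
  -- all stacks are nonempty
  have hne : ∀ i, w i ≠ [] := by
    intro i
    obtain ⟨γ, rest, hγ, _⟩ := hstep i
    simp only [hw, hγ]
    simp
  set D : ℕ → ℕ := fun i => sSup (KBAux.dset w i) with hD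
  -- esh bound
  have hesh : ∀ i, (w i).length ≤ k + D i := by
    intro i
    have := hbd i
    have he : esh w i = (w i).length - D i := rfl
    have : (w i).length - D i ≤ k := by
      rw [← he]; exact this
    omega
  have hDb : ∀ i j, D i + 1 ≤ (w (i + j)).length := fun i j => KBAux.dsup_bound hne i j
  have hDm : ∀ i, D i ≤ D (i + 1) := fun i => KBAux.dsup_mono hne i
  -- k ≥ 1
  have hw0 : w 0 = [P.bot] := by simp [hw, h0]
  have hk1 : 1 ≤ k := by
    have h1 := hesh 0
    have h2 := hDb 0 0
    simp [hw0] at h1 h2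
    omega
  -- the truncated stack lengths
  set l : ℕ → ℕ := fun i =>
    i.rec 1 (fun j lj => if (w (j + 1)).length < (w j).length then lj - 1 else min (lj + 1) k)
    with hl
  have hl0 : l 0 = 1 := rfl
  have hlS : ∀ i, l (i + 1) =
      if (w (i + 1)).length < (w i).length then l i - 1 else min (l i + 1) k := fun i => rfl
  -- step facts: each step either pops or pushes
  have hlen1 : ∀ i, 1 ≤ (w i).length := by
    intro i
    cases hwi : w i with
    | nil => exact absurd hwi (hne i)
    | cons a t => simp [hwi]
  -- invariant
  have inv : ∀ i, 1 ≤ l i ∧ l i ≤ k ∧ (w i).length ≤ D i + l i := by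
    intro i
    induction i with
    | zero =>
      refine ⟨le_refl 1, hk1, ?_⟩
      have := hl0
      simp [hw0]
      omega
    | succ i ih =>
      obtain ⟨γ, rest, hγ, hcase⟩ := hstep i
      have hwi : w i = γ :: rest := hγ
      rcases hcase with ⟨hrule, hrest⟩ | ⟨γ', hrule, hrest⟩
      · -- pop
        have hwi1 : w (i + 1) = rest := hrest
        have hlt : (w (i + 1)).length < (w i).length := by
          rw [hwi, hwi1]; simp
        rw [hlS i, if_pos hlt]
        have hDb1 : D i + 1 ≤ (w (i + 1)).length := hDb i 1
        have hDm1 := hDm i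
        obtain ⟨h1, h2, h3⟩ := ih
        constructor
        · omega
        constructor
        · omega
        · rw [hwi, hwi1] at *; simp at *; omega
      · -- push
        have hwi1 : w (i + 1) = γ' :: γ :: rest := hrest
        have hlt : ¬ (w (i + 1)).length < (w i).length := by
          rw [hwi, hwi1]; simp
        rw [hlS i, if_neg hlt]
        have hDm1 := hDm i
        have hesh1 := hesh (i + 1)
        obtain ⟨h1, h2, h3⟩ := ih
        refine ⟨by omega, by omega, ?_⟩
        rw [hwi1]
        rw [hwi, hwi1] at *
        simp at *
        omega
  -- the simulating run
  refine ⟨fun i => ((ρ i).1, (w i).take (l i)), ?_, ?_⟩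
  · simp only [hw0, hl0, h0]
    simp
  · intro i
    obtain ⟨γ, rest, hγ, hcase⟩ := hstep i
    have hwi : w i = γ :: rest := hγ
    obtain ⟨hli1, hlik, _⟩ := inv i
    have htake : (w i).take (l i) = γ :: rest.take (l i - 1) := by
      rw [hwi]
      conv_lhs => rw [show l i = (l i - 1) + 1 by omega]
      simp
    refine ⟨?_, ?_, ?_⟩
    · simp only [htake]; simp
    · simp only [List.length_take]
      exact le_trans (min_le_left _ _) hlik
    · rcases hcase with ⟨hrule, hrest⟩ | ⟨γ', hrule, hrest⟩
      · -- pop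
        have hwi1 : w (i + 1) = rest := hrest
        have hlt : (w (i + 1)).length < (w i).length := by rw [hwi, hwi1]; simp
        refine ⟨rest.take (l i - 1), ⟨γ, rest.take (l i - 1), htake, Or.inl ⟨hrule, rfl⟩⟩, ?_⟩
        show List.take (l (i + 1)) (w (i + 1)) = _
        rw [hlS i, if_pos hlt, hwi1, List.take_take]
        congr 1
        omega
      · -- push
        have hwi1 : w (i + 1) = γ' :: γ :: rest := hrest
        have hlt : ¬ (w (i + 1)).length < (w i).length := by rw [hwi, hwi1]; simp
        refine ⟨γ' :: γ :: rest.take (l i - 1),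
          ⟨γ, rest.take (l i - 1), htake, Or.inr ⟨γ', hrule, rfl⟩⟩, ?_⟩
        show List.take (l (i + 1)) (w (i + 1)) = _
        rw [hlS i, if_neg hlt, hwi1]
        have hrw : γ' :: γ :: rest.take (l i - 1) = (γ' :: γ :: rest).take (l i + 1) := by
          conv_rhs => rw [show l i + 1 = (l i - 1) + 1 + 1 by omega]
          simp
        rw [hrw, List.take_take, min_comm]
end

section
/- If an infinite word v is accepted by the finite-state machine P_k (the k-restriction of a PDM P), then v admits an effectively k-bounded run in P. -/
/-- Reconstruct the full run of `P` from a run of the restriction `P_k`. -/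
def fullRun {Q Γ A : Type} (P : PDM Q Γ A) (σ : ℕ → Q × List Γ) : ℕ → Q × List Γ
  | 0 => (P.q0, [P.bot])
  | (i+1) => ((σ (i+1)).1,
      if (σ (i+1)).2.length < (σ i).2.length then (fullRun P σ i).2.tail
      else (σ (i+1)).2.take 1 ++ (fullRun P σ i).2)

lemma fullRun_succ {Q Γ A : Type} (P : PDM Q Γ A) (σ : ℕ → Q × List Γ) (i : ℕ) :
    fullRun P σ (i+1) = ((σ (i+1)).1,
      if (σ (i+1)).2.length < (σ i).2.length then (fullRun P σ i).2.tail
      else (σ (i+1)).2.take 1 ++ (fullRun P σ i).2) := rfl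

lemma suffix_of_suffix_cons {Γ : Type*} {u t : List Γ} {x : Γ}
    (h : u <:+ x :: t) (hl : u.length ≤ t.length) : u <:+ t := by
  obtain ⟨s, hs⟩ := h
  cases s with
  | nil =>
    simp only [List.nil_append] at hs
    subst hs; simp at hl
  | cons y s' =>
    simp only [List.cons_append, List.cons.injEq] at hs
    exact ⟨s', hs.2⟩

lemma fullRun_inv {Q Γ A : Type} {P : PDM Q Γ A} {k : ℕ} {v : ℕ → A} {σ : ℕ → Q × List Γ}
    (hσ0 : σ 0 = (P.q0, [P.bot])) (hσ : ∀ i, KStep P k (σ i) (v i) (σ (i+1))) :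
    ∀ i, (fullRun P σ i).1 = (σ i).1 ∧ (σ i).2 <+: (fullRun P σ i).2 := by
  intro i
  induction i with
  | zero =>
    constructor
    · simp [fullRun, hσ0]
    · rw [hσ0]; simp [fullRun]
  | succ i ih =>
    obtain ⟨hq, t, ht⟩ := ih
    obtain ⟨h1, hk, w', ⟨γ, rest, hst, hc⟩, hw⟩ := hσ i
    have hρi : (fullRun P σ i).2 = γ :: (rest ++ t) := by
      rw [← ht, hst]; simp
    have hℓ : (σ i).2.length = rest.length + 1 := by rw [hst]; simp
    rcases hc with ⟨hrule, hrest⟩ | ⟨γ', hrule, hw'⟩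
    · -- pop
      simp only at hrest
      have hwσ : (σ (i+1)).2 = rest := by
        rw [hw, hrest, List.take_of_length_le (by omega : rest.length ≤ k)]
      have hlt : (σ (i+1)).2.length < (σ i).2.length := by rw [hwσ, hℓ]; omega
      rw [fullRun_succ, if_pos hlt, hρi]
      exact ⟨rfl, by rw [hwσ]; exact ⟨t, rfl⟩⟩
    · -- push
      simp only at hw'
      have hwσ : (σ (i+1)).2 = (γ' :: γ :: rest).take k := by rw [hw, hw']
      have hk1 : 1 ≤ k := le_trans h1 hk
      have hlen : (σ (i+1)).2.length = min (rest.length + 2) k := by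
        rw [hwσ, List.length_take]; simp [Nat.min_comm]
      have hnlt : ¬ (σ (i+1)).2.length < (σ i).2.length := by
        rw [hlen, hℓ]; omega
      have htake1 : (σ (i+1)).2.take 1 = [γ'] := by
        obtain ⟨k', rfl⟩ : ∃ k', k = k' + 1 := ⟨k - 1, by omega⟩
        rw [hwσ]; simp
      rw [fullRun_succ, if_neg hnlt, htake1, hρi]
      refine ⟨rfl, ?_⟩
      rw [hwσ]
      refine (List.take_prefix _ _).trans ?_
      exact ⟨t, by simp⟩

lemma fullRun_step {Q Γ A : Type} {P : PDM Q Γ A} {k : ℕ} {v : ℕ → A} {σ : ℕ → Q × List Γ}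
    (hσ0 : σ 0 = (P.q0, [P.bot])) (hσ : ∀ i, KStep P k (σ i) (v i) (σ (i+1))) (i : ℕ) :
    PStep P (fullRun P σ i) (v i) (fullRun P σ (i+1)) ∧
    (fullRun P σ i).2.length - (σ i).2.length ≤
      (fullRun P σ (i+1)).2.length - (σ (i+1)).2.length ∧
    (∀ u : List Γ, u <:+ (fullRun P σ i).2 → u.length < (fullRun P σ i).2.length →
      u <:+ (fullRun P σ (i+1)).2) := by
  obtain ⟨hq, t, ht⟩ := fullRun_inv hσ0 hσ i
  obtain ⟨h1, hk, w', ⟨γ, rest, hst, hc⟩, hw⟩ := hσ i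
  have hρi : (fullRun P σ i).2 = γ :: (rest ++ t) := by
    rw [← ht, hst]; simp
  have hℓ : (σ i).2.length = rest.length + 1 := by rw [hst]; simp
  rcases hc with ⟨hrule, hrest⟩ | ⟨γ', hrule, hw'⟩
  · -- pop
    simp only at hrest
    have hwσ : (σ (i+1)).2 = rest := by
      rw [hw, hrest, List.take_of_length_le (by omega : rest.length ≤ k)]
    have hlt : (σ (i+1)).2.length < (σ i).2.length := by rw [hwσ, hℓ]; omega
    have hρ1 : fullRun P σ (i+1) = ((σ (i+1)).1, rest ++ t) := by
      rw [fullRun_succ, if_pos hlt, hρi]; rfl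
    refine ⟨⟨γ, rest ++ t, by rw [hρi], Or.inl ⟨?_, by rw [hρ1]⟩⟩, ?_, ?_⟩
    · rw [hq, hρ1]; exact hrule
    · rw [hρ1, hρi, hwσ, hℓ]
      simp only [List.length_cons, List.length_append]
      omega
    · intro u hu hul
      rw [hρ1]
      rw [hρi] at hu hul
      simp only [List.length_cons, List.length_append] at hul
      exact suffix_of_suffix_cons hu (by simp only [List.length_append]; omega)
  · -- push
    simp only at hw'
    have hwσ : (σ (i+1)).2 = (γ' :: γ :: rest).take k := by rw [hw, hw']
    have hk1 : 1 ≤ k := le_trans h1 hk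
    have hlen : (σ (i+1)).2.length = min (rest.length + 2) k := by
      rw [hwσ, List.length_take]; simp [Nat.min_comm]
    have hnlt : ¬ (σ (i+1)).2.length < (σ i).2.length := by rw [hlen, hℓ]; omega
    have htake1 : (σ (i+1)).2.take 1 = [γ'] := by
      obtain ⟨k', rfl⟩ : ∃ k', k = k' + 1 := ⟨k - 1, by omega⟩
      rw [hwσ]; simp
    have hρ1 : fullRun P σ (i+1) = ((σ (i+1)).1, γ' :: γ :: (rest ++ t)) := by
      rw [fullRun_succ, if_neg hnlt, htake1, hρi]; rfl
    refine ⟨⟨γ, rest ++ t, by rw [hρi], Or.inr ⟨γ', ?_, by rw [hρ1]⟩⟩, ?_, ?_⟩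
    · rw [hq, hρ1]; exact hrule
    · rw [hρ1, hρi, hℓ, hlen]
      simp only [List.length_cons, List.length_append]
      omega
    · intro u hu _
      rw [hρ1]
      rw [hρi] at hu
      exact hu.trans ⟨[γ'], rfl⟩

/-- If the ω-word `v` is accepted by the finite-state machine `P_k` (the
`k`-restriction of the PDM `P`), then `v` admits an effectively `k`-bounded run
in `P`. -/
theorem restriction_accepted_implies_kbounded_run {Q Γ A : Type} (P : PDM Q Γ A) (k : ℕ)
    (v : ℕ → A)
    (h : ∃ σ, IsKRun P k v σ) :
    ∃ ρ, IsRun P v ρ ∧ EffKBounded k ρ := by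
  obtain ⟨σ, hσ0, hσs⟩ := h
  set ρ := fullRun P σ with hρdef
  have hstep := fullRun_step hσ0 hσs
  simp only [← hρdef] at hstep
  refine ⟨ρ, ⟨rfl, fun i => (hstep i).1⟩, ?_⟩
  have hprefix : ∀ i, (σ i).2 <+: (ρ i).2 := fun i => (fullRun_inv hσ0 hσs i).2
  have hℓlen : ∀ i, (σ i).2.length ≤ (ρ i).2.length := fun i => (hprefix i).length_le
  have h1 : ∀ i, 1 ≤ (σ i).2.length := fun i => (hσs i).1
  have hkℓ : ∀ i, (σ i).2.length ≤ k := fun i => (hσs i).2.1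
  have hdmono : ∀ i m, (ρ i).2.length - (σ i).2.length ≤
      (ρ (i+m)).2.length - (σ (i+m)).2.length := by
    intro i m
    induction m with
    | zero => exact le_refl _
    | succ m ih => exact ih.trans ((hstep (i+m)).2.1)
  intro i
  set u := (ρ i).2.drop ((σ i).2.length) with hu
  have hulen : u.length = (ρ i).2.length - (σ i).2.length := by
    rw [hu, List.length_drop]
  have hsuff : ∀ m, u <:+ (ρ (i+m)).2 := by
    intro m
    induction m with
    | zero => exact List.drop_suffix _ _
    | succ m ih =>
      refine (hstep (i+m)).2.2 u ih ?_
      have h2 := hdmono i m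
      have h3 := h1 (i+m)
      have h4 := hℓlen (i+m)
      omega
  have hcand : IsDarkSuffixCand (fun n => (ρ n).2) i u := by
    intro m
    refine ⟨hsuff m, fun heq => ?_⟩
    have h2 := hdmono i m
    have h3 := h1 (i+m)
    have h4 := hℓlen (i+m)
    have h5 : u.length = (ρ (i+m)).2.length := by rw [heq]
    omega
  show esh (fun n => (ρ n).2) i ≤ k
  unfold esh
  have hbdd : BddAbove {n | ∃ u' : List Γ, u'.length = n ∧
      IsDarkSuffixCand (fun n => (ρ n).2) i u'} := by
    refine ⟨(ρ i).2.length, ?_⟩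
    rintro n ⟨u', hlen', hc'⟩
    have hsuf : u' <:+ (ρ i).2 := by simpa using (hc' 0).1
    rw [← hlen']
    exact hsuf.length_le
  have hmem : u.length ∈ {n | ∃ u' : List Γ, u'.length = n ∧
      IsDarkSuffixCand (fun n => (ρ n).2) i u'} := ⟨u, rfl, hcand⟩
  have hsup := le_csSup hbdd hmem
  have hsub := Nat.sub_le_sub_left hsup ((fun n => (ρ n).2) i).length
  refine hsub.trans ?_
  have h4 := hℓlen i
  have h5 := hkℓ i
  simp only
  omega
end

section
/- In the construction of a k-bounded run of P from a run of P_k, the reconstructed stack heights satisfy the invariant |w_{i+1}w′_{i+1}| − |w_i w′_i| ≥ |w_{i+1}| − |w_i| for all i ≥ 0, and consequently |w_{i+j}w′_{i+j}| − |w_i w′_i| ≥ 1 − k for all i, j > 0. -/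
/-- **Stack-height invariant in the reconstruction of a `k`-bounded run.**
Given a run `(qᵢ, wᵢ)` of `P_k` (so `1 ≤ |wᵢ| ≤ k`) and the reconstructed hidden
suffixes `w′ᵢ` (with `w′₀ = ε`, `w′_{i+1} = w′ᵢ` when the `P_k` step is a direct `P`
step, and `w′_{i+1} = γ·w′ᵢ` when the `P_k` step truncates a push, in which case
`|wᵢ| = |w_{i+1}| = k`), the reconstructed stack heights satisfy
`|w_{i+1}w′_{i+1}| − |wᵢw′ᵢ| ≥ |w_{i+1}| − |wᵢ|` for all `i`, and consequently
`|w_{i+j}w′_{i+j}| − |wᵢw′ᵢ| ≥ 1 − k` for all `i, j > 0`. -/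
theorem reconstruction_invariant {Γ : Type*} (k : ℕ) (w w' : ℕ → List Γ)
    (hw0 : w' 0 = [])
    (hlen : ∀ i, 1 ≤ (w i).length ∧ (w i).length ≤ k)
    (hconstr : ∀ i, w' (i + 1) = w' i ∨
      ∃ γ : Γ, (w i).length = k ∧ (w (i + 1)).length = k ∧ w' (i + 1) = γ :: w' i) :
    (∀ i, (((w (i + 1)).length : ℤ) + (w' (i + 1)).length) - (((w i).length : ℤ) + (w' i).length)
        ≥ ((w (i + 1)).length : ℤ) - ((w i).length : ℤ)) ∧
    (∀ i j, 0 < i → 0 < j →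
      (((w (i + j)).length : ℤ) + (w' (i + j)).length) - (((w i).length : ℤ) + (w' i).length)
        ≥ 1 - (k : ℤ)) := by
  have hmono : ∀ i, (w' i).length ≤ (w' (i + 1)).length := by
    intro i
    rcases hconstr i with h | ⟨γ, _, _, h⟩ <;> simp [h]
  have hmono' : ∀ i j, (w' i).length ≤ (w' (i + j)).length := by
    intro i j
    induction j with
    | zero => simp
    | succ n ih => exact le_trans ih (hmono (i + n))
  constructor
  · intro i
    rcases hconstr i with h | ⟨γ, _, _, h⟩ <;> simp [h] <;> omega
  · intro i j _ _
    have h1 := (hlen (i + j)).1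
    have h2 := (hlen i).2
    have h3 := hmono' i j
    omega
end
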